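/- Assuming the Maynard–Tao theorem as a hypothesis: if 𝒜 = {a_1 < a_2 < ⋯} is an infinite set of integers and f_𝒜(n) denotes the number of pairs (p, a) with p prime, a ∈ 𝒜, and n = p + a, then limsup_{n→∞} f_𝒜(n) = +∞. -/

import Mathlib

open scoped Classical

open Filter

/-- A finite set of integers is admissible if modulo every prime `p`
it occupies at most `p - 1` residue classes. -/
def IsAdmissible (B : Finset ℤ) : Prop :=
  ∀ p : ℕ, p.Prime → (B.image (fun b => b % (p : ℤ))).card ≤ p - 1

/-!
Pigeonhole mod `k!` gives `k` elements `a_i` of `𝒜` that are pairwise congruent mod `k!`; the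
set `B = {-a_i}` is then admissible. For `k log k > e^{8m+4}`, Maynard–Tao yields arbitrarily
large `n` with `n - a_i` prime for at least `m` indices `i`, i.e. `f_𝒜(n) ≥ m`.
-/

open scoped Nat

/-- Primes `p ≤ #B` divide `#B !`, so `B` sits in one class mod `p`; primes `p > #B` leave a class
free simply because `B` has too few elements. -/
lemma isAdmissible_of_modEq_factorial {B : Finset ℤ}
    (hB : ∀ x ∈ B, ∀ y ∈ B, x ≡ y [ZMOD (B.card ! : ℕ)]) : IsAdmissible B := by
  intro p hp
  rcases le_or_gt p B.card with hpB | hBp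
  · have hp_dvd : ((p : ℕ) : ℤ) ∣ ((B.card ! : ℕ) : ℤ) :=
      Int.natCast_dvd_natCast.2 (Nat.dvd_factorial hp.pos hpB)
    have hone : (B.image (fun b => b % (p : ℤ))).card ≤ 1 := by
      refine Finset.card_le_one.2 ?_
      simp only [Finset.mem_image]
      rintro _ ⟨x, hx, rfl⟩ _ ⟨y, hy, rfl⟩
      exact (hB x hx y hy).of_dvd hp_dvd
    have := hp.two_le
    omega
  · exact Finset.card_image_le.trans (by omega)

lemma Set.Infinite.exists_subset_card_eq_modEq {S : Set ℤ} (hS : S.Infinite) (M : ℕ) [NeZero M]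
    (k : ℕ) : ∃ B : Finset ℤ, ↑B ⊆ S ∧ B.card = k ∧ ∀ x ∈ B, ∀ y ∈ B, x ≡ y [ZMOD M] := by
  obtain ⟨r, hr⟩ : ∃ r : ZMod M, (S ∩ (fun b : ℤ => (b : ZMod M)) ⁻¹' {r}).Infinite := by
    by_contra! hfin
    exact hS ((Set.finite_iUnion hfin).subset fun x hx => Set.mem_iUnion.2 ⟨x, hx, rfl⟩)
  obtain ⟨B, hBr, rfl⟩ := hr.exists_subset_card_eq k
  refine ⟨B, hBr.trans Set.inter_subset_left, rfl, fun x hx y hy => ?_⟩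
  exact (ZMod.intCast_eq_intCast_iff _ _ _).1 ((hBr hx).2.trans (hBr hy).2.symm)

lemma Set.Infinite.exists_admissible_subset_card_eq {S : Set ℤ} (hS : S.Infinite) (k : ℕ) :
    ∃ B : Finset ℤ, ↑B ⊆ S ∧ B.card = k ∧ IsAdmissible B := by
  have : NeZero k ! := ⟨k.factorial_ne_zero⟩
  obtain ⟨B, hBS, rfl, hB⟩ := hS.exists_subset_card_eq_modEq k ! k
  exact ⟨B, hBS, rfl, isAdmissible_of_modEq_factorial hB⟩

lemma exists_nat_lt_mul_log (x : ℝ) : ∃ k : ℕ, x < k * Real.log k :=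
  ((tendsto_natCast_atTop_atTop.atTop_mul_atTop₀
    (Real.tendsto_log_atTop.comp tendsto_natCast_atTop_atTop)).eventually_gt_atTop x).exists

/-- `f_A(n)` is the cardinality of `representations A n`. -/
def representations (A : Set ℤ) (n : ℤ) : Set (ℕ × ℤ) :=
  {q | q.1.Prime ∧ q.2 ∈ A ∧ n = (q.1 : ℤ) + q.2}

lemma finite_representations {A : Set ℤ} (hA : BddBelow A) (n : ℤ) :
    (representations A n).Finite := by
  obtain ⟨c, hc⟩ := hA
  refine Set.Finite.of_finite_image (f := Prod.snd) ((Set.finite_Icc c n).subset ?_) ?_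
  · rintro _ ⟨q, ⟨-, hqA, hqn⟩, rfl⟩
    exact ⟨hc hqA, by omega⟩
  · rintro q ⟨-, -, hq⟩ q' ⟨-, -, hq'⟩ h
    exact Prod.ext (by omega) h

/-- Each `b ∈ B` with `n + b = p` prime yields the representation `n = p + (-b)`. -/
lemma card_filter_prime_le_ncard_representations {A : Set ℤ} (hA : BddBelow A) {B : Finset ℤ}
    (hBA : ↑B ⊆ -A) (n : ℤ) :
    (B.filter (fun b => ∃ p : ℕ, p.Prime ∧ n + b = (p : ℤ))).card ≤
      (representations A n).ncard := by
  rw [← Set.ncard_coe_finset]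
  refine Set.ncard_le_ncard_of_injOn (fun b => ((n + b).toNat, -b)) ?_ ?_
    (finite_representations hA n)
  · intro b hb
    obtain ⟨hbB, p, hp, hnp⟩ := Finset.mem_filter.1 hb
    refine ⟨by rw [hnp, Int.toNat_natCast]; exact hp, hBA hbB, by omega⟩
  · intro x _ y _ h
    simpa using congrArg Prod.snd h

theorem limsup_representation_function_eq_top
    (maynard_tao : ∀ m : ℕ, 2 ≤ m → ∀ B : Finset ℤ, IsAdmissible B →
      (B.card : ℝ) * Real.log B.card > Real.exp (8 * m + 4) →
      ∀ N : ℤ, ∃ n : ℤ, N < n ∧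
        m ≤ (B.filter (fun b => ∃ p : ℕ, p.Prime ∧ n + b = (p : ℤ))).card)
    (a : ℕ → ℤ) (ha : StrictMono a) :
    Filter.limsup
      (fun n : ℤ =>
        (({q : ℕ × ℤ | q.1.Prime ∧ q.2 ∈ Set.range a ∧ n = (q.1 : ℤ) + q.2}.ncard : ℕ∞)))
      Filter.atTop = ⊤ := by
  have hbdd : BddBelow (Set.range a) := ⟨a 0, by rintro _ ⟨i, rfl⟩; exact ha.monotone i.zero_le⟩
  have hinf : (-Set.range a).Infinite := by
    rw [← Set.image_neg_eq_neg]
    exact (Set.infinite_range_of_injective ha.injective).image neg_injective.injOn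
  refine ENat.eq_top_iff_forall_ge.2 fun m => le_limsup_of_frequently_le' ?_
  refine frequently_atTop.2 fun N => ?_
  obtain ⟨k, hk⟩ := exists_nat_lt_mul_log (Real.exp (8 * ((max 2 m : ℕ) : ℝ) + 4))
  obtain ⟨B, hBA, rfl, hB⟩ := hinf.exists_admissible_subset_card_eq k
  obtain ⟨n, hNn, hm⟩ := maynard_tao (max 2 m) (le_max_left _ _) B hB hk N
  refine ⟨n, hNn.le, ?_⟩
  have hrep := card_filter_prime_le_ncard_representations hbdd hBA n
  exact_mod_cast (le_max_right 2 m).trans (hm.trans hrep)
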